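/- Reduced Hamilton–Jacobi equation. Let S^i(x,u), i = 1,…,m, be smooth functions and let γ̄ = dS be the exterior derivative of the 1-semibasic m-form S = S^i(x,u) ∂_i⌟d_mx on E, so that the associated section of J¹π* → E has p-components γ^i_α = ∂S^i/∂u^α. Then the m-form h∘μ∘γ̄ = −H(x,u,∂S^i/∂u^α) d_mx + (∂S^i/∂u^α) du^α∧(∂_i⌟d_mx) on E is closed if and only if there exists a function f: ℝ^m → ℝ such that Σ_i ∂S^i/∂x^i(x,u) + H(x^j, u^β, ∂S^i/∂u^α(x,u)) = f(x) for all (x,u), i.e. the left-hand side is independent of the fibre variables u^α. -/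

import Mathlib

open scoped BigOperators

noncomputable section

/-- A raw `k`-cochain on `E`: a scalar function of a point and `k` tangent vectors.
Smooth differential `k`-forms are regarded as such cochains by evaluation. -/
abbrev Coch (E : Type) (k : ℕ) : Type := E → (Fin k → E) → ℝ

/-- The exterior derivative of a `k`-cochain:
`(dω)(x)(v₀,…,v_k) = ∑ⱼ (-1)ʲ ∂_{vⱼ}(y ↦ ω(y)(v₀,…,v̂ⱼ,…,v_k))(x)`. -/
noncomputable def extDer {E : Type} [NormedAddCommGroup E] [NormedSpace ℝ E] {k : ℕ}
    (ω : Coch E k) : Coch E (k + 1) := fun x v =>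
  ∑ j : Fin (k + 1),
    (-1 : ℝ) ^ (j : ℕ) * fderiv ℝ (fun y => ω y (v ∘ j.succAbove)) x (v j)

/-- Wedge product of a 1-cochain with a `k`-cochain. -/
def wedge1 {E : Type} {k : ℕ} (θ : Coch E 1) (ω : Coch E k) : Coch E (k + 1) := fun x v =>
  ∑ j : Fin (k + 1), (-1 : ℝ) ^ (j : ℕ) * θ x (fun _ => v j) * ω x (v ∘ j.succAbove)

/-- Interior product (contraction) of a cochain with a vector field. -/
def iotaV {E : Type} {k : ℕ} (X : E → E) (ω : Coch E (k + 1)) : Coch E k := fun x v =>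
  ω x (Fin.cons (X x) v)

/-- Pullback of a cochain along a (smooth) map. -/
noncomputable def pullC {E F : Type} [NormedAddCommGroup E] [NormedSpace ℝ E]
    [NormedAddCommGroup F] [NormedSpace ℝ F] {k : ℕ}
    (f : F → E) (ω : Coch E k) : Coch F k := fun x v =>
  ω (f x) fun a => fderiv ℝ f x (v a)

/-- The configuration bundle `E = ℝ^m × ℝ^N` with fibre coordinates `u^α`. -/
abbrev Eb (m N : ℕ) : Type := (Fin m → ℝ) × (Fin N → ℝ)

/-- The coordinate volume form `d_mx = dx¹∧⋯∧dx^m` on `E`. -/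
def dmxE (m N : ℕ) : Coch (Eb m N) m := fun _ v => Matrix.det (Matrix.of fun a b => (v b).1 a)

/-- The coordinate 1-form `du^α` on `E`. -/
def duE (m N : ℕ) (α : Fin N) : Coch (Eb m N) 1 := fun _ v => (v 0).2 α

/-- The coordinate vector `∂/∂xⁱ` on `E`. -/
def XdirE (m N : ℕ) (i : Fin m) : Eb m N := (Pi.single i 1, 0)

/-- The `m`-form `du^α ∧ (∂_i ⌟ d_mx) = -(∂_i ⌟ (du^α ∧ d_mx))` on `E`. -/
def duContrE (m N : ℕ) (α : Fin N) (i : Fin m) : Coch (Eb m N) m := fun e v =>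
  -(iotaV (fun _ => XdirE m N i) (wedge1 (duE m N α) (dmxE m N)) e v)

/-! Writing constant-coefficient forms as determinants of coordinate covectors gives
`d(f r₁∧⋯∧r_k) = df∧r₁∧⋯∧r_k`. Hence `d(-H̃ d_mx) = -∂_αH̃ du^α∧d_mx`, where `H̃ = H(x, u, γ)`, and
`d(γⁱ_α du^α∧(∂_i⌟d_mx)) = -∂_iγⁱ_α du^α∧d_mx + ∂_βγⁱ_α du^β∧du^α∧(∂_i⌟d_mx)`; the last sum
vanishes because `∂_βγⁱ_α = ∂²Sⁱ/∂u^β∂u^α` is symmetric in `α, β`. By symmetry of mixed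
partials `∂_iγⁱ_α = ∂_α(∂_iSⁱ)`, so the exterior derivative is `-∂_αF du^α∧d_mx` with
`F = ∂_iSⁱ + H̃`: the form is closed iff `F` has no fibre derivatives, i.e. depends on `x` only. -/

open Finset

namespace HamiltonJacobi

section WedgeDet

variable {E : Type*} {k : ℕ}

/-- The wedge product `r 0 ∧ ⋯ ∧ r (k-1)` of covectors, evaluated on `v`. -/
def wedgeDet (r : Fin k → E → ℝ) (v : Fin k → E) : ℝ :=
  (Matrix.of fun a b => r a (v b)).det

theorem wedgeDet_cons (θ : E → ℝ) (r : Fin k → E → ℝ) (v : Fin (k + 1) → E) :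
    wedgeDet (Fin.cons θ r) v =
      ∑ j : Fin (k + 1), (-1 : ℝ) ^ (j : ℕ) * θ (v j) * wedgeDet r (v ∘ j.succAbove) := by
  rw [wedgeDet, Matrix.det_succ_row_zero]
  refine sum_congr rfl fun j _ => ?_
  simp [wedgeDet, Matrix.submatrix]

theorem wedgeDet_apply_cons (r : Fin (k + 1) → E → ℝ) (x : E) (w : Fin k → E) :
    wedgeDet r (Fin.cons x w) =
      ∑ a : Fin (k + 1), (-1 : ℝ) ^ (a : ℕ) * r a x * wedgeDet (r ∘ a.succAbove) w := by
  rw [wedgeDet, Matrix.det_succ_column_zero]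
  refine sum_congr rfl fun a _ => ?_
  simp [wedgeDet, Matrix.submatrix]

theorem wedgeDet_cons_apply_comp_succAbove (r : Fin (k + 1) → E → ℝ) (i : Fin (k + 1))
    (v : Fin (k + 1) → E) :
    wedgeDet (Fin.cons (r i) (r ∘ i.succAbove)) v = (-1) ^ (i : ℕ) * wedgeDet r v := by
  rw [wedgeDet_cons, wedgeDet, Matrix.det_succ_row _ i, mul_sum]
  refine sum_congr rfl fun j _ => ?_
  simp only [wedgeDet, Matrix.submatrix, Matrix.of_apply, Function.comp_apply]
  ring_nf
  simp [pow_mul']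

theorem wedgeDet_eq_zero_of_eq {r : Fin k → E → ℝ} {a b : Fin k} (hab : a ≠ b)
    (h : r a = r b) (v : Fin k → E) : wedgeDet r v = 0 :=
  Matrix.det_zero_of_row_eq hab (funext fun c => by simp [h])

theorem cons_comp_succ_succAbove {α : Type*} (x : α) (r : Fin (k + 1) → α) (i : Fin (k + 1)) :
    (Fin.cons x r : Fin (k + 2) → α) ∘ i.succ.succAbove = Fin.cons x (r ∘ i.succAbove) := by
  funext a
  cases a using Fin.cases <;> simp

theorem wedgeDet_cons_cons_comp_succAbove (θ : E → ℝ) (r : Fin (k + 1) → E → ℝ)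
    (i : Fin (k + 1)) (v : Fin (k + 2) → E) :
    wedgeDet (Fin.cons (r i) (Fin.cons θ (r ∘ i.succAbove))) v =
      (-1) ^ ((i : ℕ) + 1) * wedgeDet (Fin.cons θ r) v := by
  have h := wedgeDet_cons_apply_comp_succAbove (Fin.cons θ r) i.succ v
  rwa [Fin.cons_succ, cons_comp_succ_succAbove, Fin.val_succ] at h

theorem wedgeDet_cons_cons_swap (θ₁ θ₂ : E → ℝ) (r : Fin k → E → ℝ) (v : Fin (k + 2) → E) :
    wedgeDet (Fin.cons θ₁ (Fin.cons θ₂ r)) v = -wedgeDet (Fin.cons θ₂ (Fin.cons θ₁ r)) v := by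
  have hr : (Fin.cons θ₂ (Fin.cons θ₁ r) : Fin (k + 2) → E → ℝ) ∘ (1 : Fin (k + 2)).succAbove =
      Fin.cons θ₂ r := by
    funext a
    cases a using Fin.cases <;> simp
  have h := wedgeDet_cons_apply_comp_succAbove (Fin.cons θ₂ (Fin.cons θ₁ r)) 1 v
  rw [hr] at h
  simpa using h

end WedgeDet

theorem sum_mul_eq_zero_of_symm_of_antisymm {ι : Type*} [Fintype ι] (c d : ι → ι → ℝ)
    (hc : ∀ a b, c a b = c b a) (hd : ∀ a b, d a b = -d b a) :
    ∑ a, ∑ b, c a b * d a b = 0 := by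
  have h : ∑ a, ∑ b, c a b * d a b = -∑ a, ∑ b, c a b * d a b := by
    conv_lhs => rw [sum_comm]
    simp only [← sum_neg_distrib]
    exact sum_congr rfl fun a _ => sum_congr rfl fun b _ => by rw [hc, hd]; ring
  linarith

section ExtDer

variable {E : Type} [NormedAddCommGroup E] [NormedSpace ℝ E] {k : ℕ} {x : E}

theorem extDer_add {ω₁ ω₂ : Coch E k} (h₁ : ∀ w, DifferentiableAt ℝ (fun y => ω₁ y w) x)
    (h₂ : ∀ w, DifferentiableAt ℝ (fun y => ω₂ y w) x) (v : Fin (k + 1) → E) :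
    extDer (fun y w => ω₁ y w + ω₂ y w) x v = extDer ω₁ x v + extDer ω₂ x v := by
  simp only [extDer, fderiv_fun_add (h₁ _) (h₂ _), add_apply, mul_add,
    sum_add_distrib]

theorem extDer_sum {ι : Type*} (s : Finset ι) {ω : ι → Coch E k}
    (h : ∀ t ∈ s, ∀ w, DifferentiableAt ℝ (fun y => ω t y w) x) (v : Fin (k + 1) → E) :
    extDer (fun y w => ∑ t ∈ s, ω t y w) x v = ∑ t ∈ s, extDer (ω t) x v := by
  simp only [extDer, fderiv_fun_sum fun t ht => h t ht _, _root_.sum_apply, mul_sum]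
  exact sum_comm

theorem extDer_mul_const {f : E → ℝ} (hf : DifferentiableAt ℝ f x) (c : (Fin k → E) → ℝ)
    (v : Fin (k + 1) → E) :
    extDer (fun y w => f y * c w) x v =
      ∑ j : Fin (k + 1), (-1 : ℝ) ^ (j : ℕ) * fderiv ℝ f x (v j) * c (v ∘ j.succAbove) := by
  simp only [extDer, fderiv_mul_const hf, _root_.smul_apply, smul_eq_mul, mul_assoc,
    mul_comm (c _)]

theorem extDer_mul_wedgeDet {f : E → ℝ} (hf : DifferentiableAt ℝ f x) (r : Fin k → E → ℝ)
    (v : Fin (k + 1) → E) :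
    extDer (fun y w => f y * wedgeDet r w) x v = wedgeDet (Fin.cons (fderiv ℝ f x) r) v := by
  rw [extDer_mul_const hf, wedgeDet_cons]

end ExtDer

section Coordinates

variable {m N k : ℕ}

def coordX (m N : ℕ) (j : Fin m) : Eb m N → ℝ := fun z => z.1 j

def coordU (m N : ℕ) (α : Fin N) : Eb m N → ℝ := fun z => z.2 α

def UdirE (m N : ℕ) (α : Fin N) : Eb m N := (0, Pi.single α 1)

def duWedgeDmx (m N : ℕ) (α : Fin N) : (Fin (m + 1) → Eb m N) → ℝ :=
  wedgeDet (Fin.cons (coordU m N α) (coordX m N))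

theorem clm_apply_eq_sum (L : Eb m N →L[ℝ] ℝ) (z : Eb m N) :
    L z = ∑ j, L (XdirE m N j) * z.1 j + ∑ α, L (UdirE m N α) * z.2 α := by
  have hz : z = ∑ j, z.1 j • XdirE m N j + ∑ α, z.2 α • UdirE m N α := by
    ext i
    · simp [XdirE, UdirE, Prod.fst_sum, Pi.single_apply]
    · simp [XdirE, UdirE, Prod.snd_sum, Pi.single_apply]
  conv_lhs => rw [hz]
  simp [mul_comm]

theorem clm_apply_UdirE_eq_zero_iff (L : Eb m N →L[ℝ] ℝ) :
    (∀ α, L (UdirE m N α) = 0) ↔ ∀ w, L (0, w) = 0 :=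
  ⟨fun h w => by simp [clm_apply_eq_sum L (0, w), h], fun h α => h _⟩

theorem wedgeDet_cons_clm (L : Eb m N →L[ℝ] ℝ) (r : Fin k → Eb m N → ℝ)
    (v : Fin (k + 1) → Eb m N) :
    wedgeDet (Fin.cons ⇑L r) v =
      ∑ j, L (XdirE m N j) * wedgeDet (Fin.cons (coordX m N j) r) v +
        ∑ α, L (UdirE m N α) * wedgeDet (Fin.cons (coordU m N α) r) v := by
  simp only [wedgeDet_cons, clm_apply_eq_sum L (v _), coordX, coordU, mul_add, add_mul,
    sum_add_distrib, sum_mul, mul_sum]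
  congr 1 <;> rw [sum_comm] <;>
    exact sum_congr rfl fun _ _ => sum_congr rfl fun _ _ => by ring

theorem wedge1_duE_dmxE (α : Fin N) (e : Eb m N) (v : Fin (m + 1) → Eb m N) :
    wedge1 (duE m N α) (dmxE m N) e v = duWedgeDmx m N α v := by
  rw [duWedgeDmx, wedgeDet_cons]
  rfl

theorem duContrE_eq_wedgeDet (α : Fin N) (i : Fin (m + 1)) (e : Eb (m + 1) N)
    (w : Fin (m + 1) → Eb (m + 1) N) :
    duContrE (m + 1) N α i e w =
      (-1) ^ (i : ℕ) *
        wedgeDet (Fin.cons (coordU (m + 1) N α) (coordX (m + 1) N ∘ i.succAbove)) w := by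
  rw [duContrE, iotaV, wedge1_duE_dmxE, duWedgeDmx, wedgeDet_apply_cons, Fin.sum_univ_succ,
    Fintype.sum_eq_single i]
  · simp [coordU, coordX, XdirE, pow_succ]
    rfl
  · intro j hj
    simp [coordX, XdirE, hj]

theorem wedgeDet_coordX_XdirE : wedgeDet (coordX m N) (XdirE m N) = 1 := by
  have h : (Matrix.of fun a b => coordX m N a (XdirE m N b)) = 1 := by
    ext a b
    simp [coordX, XdirE, Matrix.one_apply, Pi.single_apply]
  rw [wedgeDet, h, Matrix.det_one]

theorem duWedgeDmx_cons_UdirE_XdirE (α β : Fin N) :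
    duWedgeDmx m N β (Fin.cons (UdirE m N α) (XdirE m N)) = if β = α then 1 else 0 := by
  rw [duWedgeDmx, wedgeDet_apply_cons, Fin.sum_univ_succ, sum_eq_zero fun a _ => by
    simp [coordX, UdirE]]
  simp [coordU, UdirE, wedgeDet_coordX_XdirE, Pi.single_apply]

theorem extDer_mul_dmxE {f : Eb m N → ℝ} {e : Eb m N} (hf : DifferentiableAt ℝ f e)
    (v : Fin (m + 1) → Eb m N) :
    extDer (fun y w => f y * dmxE m N y w) e v =
      ∑ α, fderiv ℝ f e (UdirE m N α) * duWedgeDmx m N α v := by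
  rw [show (fun y w => f y * dmxE m N y w) = fun y w => f y * wedgeDet (coordX m N) w from rfl,
    extDer_mul_wedgeDet hf, wedgeDet_cons_clm, sum_eq_zero fun j _ => ?_, zero_add]
  · rfl
  · rw [wedgeDet_eq_zero_of_eq (Fin.succ_ne_zero j).symm (by simp) v, mul_zero]

theorem extDer_mul_duContrE {f : Eb (m + 1) N → ℝ} {e : Eb (m + 1) N}
    (hf : DifferentiableAt ℝ f e) (α : Fin N) (i : Fin (m + 1)) (v : Fin (m + 2) → Eb (m + 1) N) :
    extDer (fun y w => f y * duContrE (m + 1) N α i y w) e v =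
      -(fderiv ℝ f e (XdirE (m + 1) N i) * duWedgeDmx (m + 1) N α v) +
        (-1) ^ (i : ℕ) * ∑ β, fderiv ℝ f e (UdirE (m + 1) N β) *
          wedgeDet (Fin.cons (coordU (m + 1) N β)
            (Fin.cons (coordU (m + 1) N α) (coordX (m + 1) N ∘ i.succAbove))) v := by
  have hform : (fun y w => f y * duContrE (m + 1) N α i y w) = fun y w =>
      (-1) ^ (i : ℕ) * f y *
        wedgeDet (Fin.cons (coordU (m + 1) N α) (coordX (m + 1) N ∘ i.succAbove)) w := by
    funext y w
    rw [duContrE_eq_wedgeDet]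
    ring
  rw [hform, extDer_mul_wedgeDet (hf.const_mul _), fderiv_const_mul hf, wedgeDet_cons_clm,
    Fintype.sum_eq_single i, wedgeDet_cons_cons_comp_succAbove, ← duWedgeDmx]
  · simp only [smul_apply, smul_eq_mul, mul_sum, mul_assoc]
    ring_nf
    simp [pow_mul']
  · intro j hj
    obtain ⟨a, rfl⟩ := Fin.exists_succAbove_eq hj
    rw [wedgeDet_eq_zero_of_eq (b := a.succ.succ) (Fin.succ_ne_zero _).symm (by simp) v,
      mul_zero]

end Coordinates

section Smoothness

variable {E F : Type*} [NormedAddCommGroup E] [NormedSpace ℝ E] [NormedAddCommGroup F]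
  [NormedSpace ℝ F]

theorem contDiff_fderiv_apply_const {f : E → F} {n k : WithTop ℕ∞} (hf : ContDiff ℝ n f)
    (hkn : k + 1 ≤ n) (c : E) : ContDiff ℝ k fun y => fderiv ℝ f y c :=
  (hf.fderiv_right hkn).clm_apply contDiff_const

theorem fderiv_fderiv_apply_comm {f : E → F} (hf : ContDiff ℝ 2 f) (x a b : E) :
    fderiv ℝ (fun y => fderiv ℝ f y a) x b = fderiv ℝ (fun y => fderiv ℝ f y b) x a := by
  have hd : DifferentiableAt ℝ (fderiv ℝ f) x :=
    (hf.fderiv_right (m := 1) (by norm_num)).differentiable one_ne_zero x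
  have hflip (c : E) : fderiv ℝ (fun y => fderiv ℝ f y c) x = (fderiv ℝ (fderiv ℝ f) x).flip c := by
    rw [fderiv_clm_apply hd (differentiableAt_const c)]
    simp
  rw [hflip, hflip, ContinuousLinearMap.flip_apply, ContinuousLinearMap.flip_apply]
  exact (hf.contDiffAt.isSymmSndFDerivAt (by simp)).eq b a

theorem exists_eq_comp_fst_iff {φ : E × F → ℝ} (hφ : Differentiable ℝ φ) :
    (∀ z w, fderiv ℝ φ z (0, w) = 0) ↔ ∃ f : E → ℝ, ∀ z, φ z = f z.1 := by
  have hslice (x : E) (u : F) :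
      fderiv ℝ (fun u => φ (x, u)) u = (fderiv ℝ φ (x, u)).comp (.inr ℝ E F) :=
    ((hφ _).hasFDerivAt.comp u (hasFDerivAt_prodMk_right x u)).fderiv
  constructor
  · intro h
    refine ⟨fun x => φ (x, 0), fun z => ?_⟩
    refine is_const_of_fderiv_eq_zero (f := fun u => φ (z.1, u))
      (hφ.comp (differentiable_const z.1 |>.prodMk differentiable_id)) (fun u => ?_) z.2 0
    ext w
    simp [hslice, h]
  · rintro ⟨f, hf⟩ z w
    have hconst : (fun u => φ (z.1, u)) = fun _ => f z.1 := funext fun u => hf (z.1, u)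
    have h := hslice z.1 z.2
    rw [hconst, fderiv_fun_const] at h
    simpa using (DFunLike.congr_fun h w).symm

end Smoothness

section Forms

variable {m N : ℕ} {H : (Fin m → ℝ) × (Fin N → ℝ) × (Fin m → Fin N → ℝ) → ℝ}
  {S : Eb m N → Fin m → ℝ}

/-- The section `γⁱ_α = ∂Sⁱ/∂u^α` of `J¹π* → E` determined by `dS`. -/
def momentum (S : Eb m N → Fin m → ℝ) (e : Eb m N) (i : Fin m) (α : Fin N) : ℝ :=
  fderiv ℝ (fun y => S y i) e (UdirE m N α)

def xDivergence (S : Eb m N → Fin m → ℝ) (e : Eb m N) : ℝ :=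
  ∑ i, fderiv ℝ (fun y => S y i) e (XdirE m N i)

def hamiltonianOnSection (H : (Fin m → ℝ) × (Fin N → ℝ) × (Fin m → Fin N → ℝ) → ℝ)
    (S : Eb m N → Fin m → ℝ) (e : Eb m N) : ℝ :=
  H (e.1, e.2, momentum S e)

def hamiltonJacobiLhs (H : (Fin m → ℝ) × (Fin N → ℝ) × (Fin m → Fin N → ℝ) → ℝ)
    (S : Eb m N → Fin m → ℝ) (e : Eb m N) : ℝ :=
  xDivergence S e + hamiltonianOnSection H S e

def momentumForm (S : Eb m N → Fin m → ℝ) : Coch (Eb m N) m := fun e v =>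
  ∑ i, ∑ α, momentum S e i α * duContrE m N α i e v

/-- The `m`-form `h∘μ∘γ̄` on `E`. -/
def hjForm (H : (Fin m → ℝ) × (Fin N → ℝ) × (Fin m → Fin N → ℝ) → ℝ)
    (S : Eb m N → Fin m → ℝ) : Coch (Eb m N) m := fun e v =>
  -hamiltonianOnSection H S e * dmxE m N e v + momentumForm S e v

theorem contDiff_momentum (hS : ContDiff ℝ 2 S) : ContDiff ℝ 1 (momentum S) :=
  contDiff_pi.2 fun i => contDiff_pi.2 fun α =>
    contDiff_fderiv_apply_const (contDiff_pi.1 hS i) (by norm_num) _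

theorem differentiable_momentum_apply (hS : ContDiff ℝ 2 S) (i : Fin m) (α : Fin N) :
    Differentiable ℝ fun y => momentum S y i α :=
  (contDiff_fderiv_apply_const (contDiff_pi.1 hS i) (by norm_num) _).differentiable one_ne_zero

theorem differentiable_xDivergence (hS : ContDiff ℝ 2 S) : Differentiable ℝ (xDivergence S) :=
  Differentiable.fun_sum fun i _ =>
    (contDiff_fderiv_apply_const (contDiff_pi.1 hS i) (by norm_num) _).differentiable one_ne_zero

theorem differentiable_hamiltonianOnSection (hH : ContDiff ℝ 1 H) (hS : ContDiff ℝ 2 S) :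
    Differentiable ℝ (hamiltonianOnSection H S) :=
  (hH.comp (contDiff_fst.prodMk (contDiff_snd.prodMk (contDiff_momentum hS)))).differentiable
    one_ne_zero

theorem differentiable_hamiltonJacobiLhs (hH : ContDiff ℝ 1 H) (hS : ContDiff ℝ 2 S) :
    Differentiable ℝ (hamiltonJacobiLhs H S) :=
  (differentiable_xDivergence hS).add (differentiable_hamiltonianOnSection hH hS)

theorem differentiableAt_momentumForm (hS : ContDiff ℝ 2 S) (e : Eb m N) (w : Fin m → Eb m N) :
    DifferentiableAt ℝ (fun y => momentumForm S y w) e :=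
  DifferentiableAt.fun_sum fun i _ => DifferentiableAt.fun_sum fun α _ =>
    (differentiable_momentum_apply hS i α e).mul_const (duContrE m N α i e w)

theorem extDer_momentumForm (hS : ContDiff ℝ 2 S) (e : Eb m N) (v : Fin (m + 1) → Eb m N) :
    extDer (momentumForm S) e v =
      -∑ α, fderiv ℝ (xDivergence S) e (UdirE m N α) * duWedgeDmx m N α v := by
  cases m with
  | zero =>
    have hzero : xDivergence S = 0 := funext fun e => by simp [xDivergence]
    simp [momentumForm, extDer, hzero]
  | succ m =>
    have hSi (i : Fin (m + 1)) : ContDiff ℝ 2 fun y => S y i := contDiff_pi.1 hS i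
    have hp (i : Fin (m + 1)) (α : Fin N) : DifferentiableAt ℝ (fun y => momentum S y i α) e :=
      differentiable_momentum_apply hS i α e
    have hcancel (i : Fin (m + 1)) : ∑ α, ∑ β, fderiv ℝ (fun y => momentum S y i α) e
        (UdirE (m + 1) N β) * wedgeDet (Fin.cons (coordU (m + 1) N β)
          (Fin.cons (coordU (m + 1) N α) (coordX (m + 1) N ∘ i.succAbove))) v = 0 :=
      sum_mul_eq_zero_of_symm_of_antisymm _ _
        (fun _ _ => fderiv_fderiv_apply_comm (hSi i) e _ _)
        (fun _ _ => wedgeDet_cons_cons_swap _ _ _ v)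
    have hdiv (α : Fin N) : fderiv ℝ (xDivergence S) e (UdirE (m + 1) N α) =
        ∑ i, fderiv ℝ (fun y => momentum S y i α) e (XdirE (m + 1) N i) := by
      unfold xDivergence
      rw [fderiv_fun_sum fun i _ =>
        (contDiff_fderiv_apply_const (hSi i) (by norm_num) _).differentiable one_ne_zero e,
        _root_.sum_apply]
      exact sum_congr rfl fun i _ => fderiv_fderiv_apply_comm (hSi i) e _ _
    calc extDer (momentumForm S) e v
        = ∑ i, ∑ α, extDer (fun y w => momentum S y i α * duContrE (m + 1) N α i y w) e v := by
          unfold momentumForm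
          rw [extDer_sum (ω := fun i y w => ∑ α, momentum S y i α * duContrE (m + 1) N α i y w) _
            fun i _ w => DifferentiableAt.fun_sum fun α _ =>
              (hp i α).mul_const (duContrE (m + 1) N α i e w)]
          exact sum_congr rfl fun i _ => extDer_sum _ (fun α _ w =>
            (hp i α).mul_const (duContrE (m + 1) N α i e w)) v
      _ = -∑ α, (∑ i, fderiv ℝ (fun y => momentum S y i α) e (XdirE (m + 1) N i)) *
            duWedgeDmx (m + 1) N α v := by
          simp only [extDer_mul_duContrE (hp _ _), sum_add_distrib, ← mul_sum, hcancel, mul_zero,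
            add_zero, sum_neg_distrib, sum_mul]
          rw [sum_comm]
      _ = _ := by simp only [hdiv]

theorem extDer_hjForm (hH : ContDiff ℝ 1 H) (hS : ContDiff ℝ 2 S) (e : Eb m N)
    (v : Fin (m + 1) → Eb m N) :
    extDer (hjForm H S) e v =
      -∑ α, fderiv ℝ (hamiltonJacobiLhs H S) e (UdirE m N α) * duWedgeDmx m N α v := by
  have hHS := differentiable_hamiltonianOnSection hH hS e
  unfold hjForm
  rw [extDer_add (ω₁ := fun y w => -hamiltonianOnSection H S y * dmxE m N y w)
    (fun w => hHS.fun_neg.mul_const (dmxE m N e w)) (differentiableAt_momentumForm hS e),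
    extDer_mul_dmxE hHS.fun_neg, extDer_momentumForm hS, fderiv_fun_neg,
    show hamiltonJacobiLhs H S = fun e => xDivergence S e + hamiltonianOnSection H S e from rfl,
    fderiv_fun_add (differentiable_xDivergence hS e) hHS]
  simp only [add_apply, neg_apply, add_mul, neg_mul, sum_add_distrib, sum_neg_distrib]
  ring

theorem hjForm_closed_iff (hH : ContDiff ℝ 1 H) (hS : ContDiff ℝ 2 S) :
    (∀ e v, extDer (hjForm H S) e v = 0) ↔
      ∀ e α, fderiv ℝ (hamiltonJacobiLhs H S) e (UdirE m N α) = 0 := by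
  simp only [extDer_hjForm hH hS, neg_eq_zero]
  refine ⟨fun h e α => ?_, fun h e v => sum_eq_zero fun α _ => by rw [h, zero_mul]⟩
  simpa [duWedgeDmx_cons_UdirE_XdirE] using h e (Fin.cons (UdirE m N α) (XdirE m N))

end Forms

end HamiltonJacobi

open HamiltonJacobi

/-- Reduced Hamilton–Jacobi equation, in coordinates.  Let `S = Sⁱ(x,u) ∂_i⌟d_mx` be a
1-semibasic `m`-form on `E = ℝ^m × ℝ^N` and put `γⁱ_α = ∂Sⁱ/∂u^α` (the `p`-components of
the section of `J¹π* → E` determined by `γ̄ = dS`).  Then the `m`-form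
`h∘μ∘γ̄ = −H(x,u,∂Sⁱ/∂u^α) d_mx + (∂Sⁱ/∂u^α) du^α∧(∂_i⌟d_mx)` on `E` is closed if and only
if there is `f : ℝ^m → ℝ` with
`∑ᵢ ∂Sⁱ/∂xⁱ(x,u) + H(x, u, ∂Sⁱ/∂u^α(x,u)) = f(x)` for all `(x,u)`. -/
theorem reduced_hamilton_jacobi (m N : ℕ)
    (H : (Fin m → ℝ) × (Fin N → ℝ) × (Fin m → Fin N → ℝ) → ℝ)
    (hH : ContDiff ℝ (⊤ : ℕ∞) H)
    (S : Eb m N → Fin m → ℝ) (hS : ContDiff ℝ (⊤ : ℕ∞) S)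
    -- the section `γⁱ_α = ∂Sⁱ/∂u^α`
    (γ : Eb m N → Fin m → Fin N → ℝ)
    (hγ : ∀ (e : Eb m N) (i : Fin m) (α : Fin N),
      γ e i α = fderiv ℝ (fun y => S y i) e (0, Pi.single α 1))
    -- the `m`-form `h∘μ∘γ̄` on `E`
    (G : Coch (Eb m N) m)
    (hG : ∀ (e : Eb m N) (v : Fin m → Eb m N),
      G e v = -(H (e.1, e.2, γ e)) * dmxE m N e v +
        ∑ i : Fin m, ∑ α : Fin N, γ e i α * duContrE m N α i e v) :
    (∀ (e : Eb m N) (v : Fin (m + 1) → Eb m N), extDer G e v = 0) ↔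
    (∃ f : (Fin m → ℝ) → ℝ, ∀ e : Eb m N,
      (∑ i : Fin m, fderiv ℝ (fun y => S y i) e (Pi.single i 1, 0)) +
        H (e.1, e.2, γ e) = f e.1) := by
  obtain rfl : γ = momentum S := funext fun e => funext fun i => funext (hγ e i)
  obtain rfl : G = hjForm H S := funext fun e => funext (hG e)
  have hH1 : ContDiff ℝ 1 H := hH.of_le (WithTop.coe_le_coe.2 le_top)
  have hS2 : ContDiff ℝ 2 S := hS.of_le (WithTop.coe_le_coe.2 le_top)
  calc _ ↔ ∀ e α, fderiv ℝ (hamiltonJacobiLhs H S) e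
        (UdirE m N α) = 0 := hjForm_closed_iff hH1 hS2
    _ ↔ ∀ e w, fderiv ℝ (hamiltonJacobiLhs H S) e (0, w) = 0 :=
        forall_congr' fun e => clm_apply_UdirE_eq_zero_iff _
    _ ↔ _ := exists_eq_comp_fst_iff
        (differentiable_hamiltonJacobiLhs hH1 hS2)
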